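/- arXiv:2407.16300 — 13 statements merged into one kernel-verified Lean document; each statement's English description precedes it below -/
import Mathlib

section
/- (Proposition 1(1): RStore is stronger than LStore) For any machines i, k, any location x ∈ Loc_k, any value v, and any configurations γ, γ': if γ →^{RStore_i(x,v)} γ', then γ ⇒^{LStore_i(x,v)} γ', i.e., γ' is reachable from γ by a transition sequence consisting of LStore_i(x,v) possibly interleaved with silent τ-steps. -/
/-!  The CXL0 model.

We fix an abstract type `Machine` of machines, a type `Loc` of shared
locations, and a type `Val` of values with a distinguished value `z`
(playing the role of the value `0`).  The partition of `Loc` into the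
pairwise disjoint sets `Loc_1, …, Loc_N` is encoded by an ownership map
`owner : Loc → Machine` (so `x ∈ Loc_k` iff `owner x = k`).  Volatility of
each machine's memory is given by `vol : Machine → Bool` (`vol i = true`
means machine `i`'s memory is volatile).

A configuration `γ = (Cache, Mem)` is modeled by total maps
`cache : Machine → Loc → Option Val` (with `none` playing the role of `⊥`)
and `mem : Machine → Loc → Val` (the entries of `mem i` at locations not
owned by `i` are irrelevant; the transitions never consult them). -/

/-- Transition labels of the CXL0 labeled transition system. -/
inductive CXLLabel (Machine Loc Val : Type) : Type where
  | LStore (i : Machine) (x : Loc) (v : Val)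
  | RStore (i : Machine) (x : Loc) (v : Val)
  | MStore (i : Machine) (x : Loc) (v : Val)
  | Load   (i : Machine) (x : Loc) (v : Val)
  | LFlush (i : Machine) (x : Loc)
  | RFlush (i : Machine) (x : Loc)
  | GPF    (i : Machine)
  | Crash  (i : Machine)
  | tau

/-- Configurations of the CXL0 model. -/
structure CXLConfig (Machine Loc Val : Type) : Type where
  cache : Machine → Loc → Option Val
  mem   : Machine → Loc → Val

variable {Machine Loc Val : Type} [DecidableEq Machine] [DecidableEq Loc]

/-- Single labeled transition of the CXL0 model. -/
inductive CXLStep (owner : Loc → Machine) (vol : Machine → Bool) (z : Val) :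
    CXLConfig Machine Loc Val → CXLLabel Machine Loc Val →
      CXLConfig Machine Loc Val → Prop where
  | lstore (γ : CXLConfig Machine Loc Val) (i : Machine) (x : Loc) (v : Val) :
      CXLStep owner vol z γ (.LStore i x v)
        ⟨fun j y => if y = x then (if j = i then some v else none) else γ.cache j y,
         γ.mem⟩
  | rstore (γ : CXLConfig Machine Loc Val) (i : Machine) (x : Loc) (v : Val) :
      CXLStep owner vol z γ (.RStore i x v)
        ⟨fun j y => if y = x then (if j = owner x then some v else none) else γ.cache j y,
         γ.mem⟩
  | mstore (γ : CXLConfig Machine Loc Val) (i : Machine) (x : Loc) (v : Val) :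
      CXLStep owner vol z γ (.MStore i x v)
        ⟨fun j y => if y = x then none else γ.cache j y,
         fun j y => if j = owner x ∧ y = x then v else γ.mem j y⟩
  | load_cache (γ : CXLConfig Machine Loc Val) (i j : Machine) (x : Loc) (v : Val)
      (h : γ.cache j x = some v) :
      CXLStep owner vol z γ (.Load i x v)
        ⟨fun j' y => if j' = i ∧ y = x then some v else γ.cache j' y, γ.mem⟩
  | load_mem (γ : CXLConfig Machine Loc Val) (i : Machine) (x : Loc) (v : Val)
      (h : ∀ j, γ.cache j x = none) (hm : γ.mem (owner x) x = v) :
      CXLStep owner vol z γ (.Load i x v) γ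
  | lflush (γ : CXLConfig Machine Loc Val) (i : Machine) (x : Loc)
      (h : γ.cache i x = none) :
      CXLStep owner vol z γ (.LFlush i x) γ
  | rflush (γ : CXLConfig Machine Loc Val) (i : Machine) (x : Loc)
      (h : ∀ j, γ.cache j x = none) :
      CXLStep owner vol z γ (.RFlush i x) γ
  | gpf (γ : CXLConfig Machine Loc Val) (i : Machine)
      (h : ∀ j y, γ.cache j y = none) :
      CXLStep owner vol z γ (.GPF i) γ
  | prop_cache_cache (γ : CXLConfig Machine Loc Val) (i : Machine) (x : Loc) (v : Val)
      (hik : i ≠ owner x) (h : γ.cache i x = some v) :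
      CXLStep owner vol z γ .tau
        ⟨fun j y => if y = x then
            (if j = owner x then some v else if j = i then none else γ.cache j y)
          else γ.cache j y,
         γ.mem⟩
  | prop_cache_mem (γ : CXLConfig Machine Loc Val) (x : Loc) (v : Val)
      (h : γ.cache (owner x) x = some v) :
      CXLStep owner vol z γ .tau
        ⟨fun j y => if y = x then none else γ.cache j y,
         fun j y => if j = owner x ∧ y = x then v else γ.mem j y⟩
  | crash (γ : CXLConfig Machine Loc Val) (i : Machine) :
      CXLStep owner vol z γ (.Crash i)
        ⟨fun j y => if j = i then none else γ.cache j y,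
         fun j y => if j = i ∧ vol i then z else γ.mem j y⟩

/-- `CXLTrace owner vol z γ ls γ'` : `γ'` is reachable from `γ` by a sequence of
transitions labeled by the elements of `ls`, in this order, possibly interleaved
with additional silent `τ`-steps (this is the `γ ⇒^{α_1⋯α_n} γ'` relation). -/
inductive CXLTrace (owner : Loc → Machine) (vol : Machine → Bool) (z : Val) :
    CXLConfig Machine Loc Val → List (CXLLabel Machine Loc Val) →
      CXLConfig Machine Loc Val → Prop where
  | nil (γ : CXLConfig Machine Loc Val) : CXLTrace owner vol z γ [] γ
  | tau {γ γ' γ'' : CXLConfig Machine Loc Val} {ls : List (CXLLabel Machine Loc Val)}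
      (h : CXLStep owner vol z γ .tau γ') (ht : CXLTrace owner vol z γ' ls γ'') :
      CXLTrace owner vol z γ ls γ''
  | cons {γ γ' γ'' : CXLConfig Machine Loc Val} {l : CXLLabel Machine Loc Val}
      {ls : List (CXLLabel Machine Loc Val)}
      (h : CXLStep owner vol z γ l γ') (ht : CXLTrace owner vol z γ' ls γ'') :
      CXLTrace owner vol z γ (l :: ls) γ''

/-- Reachability by a (possibly empty) finite sequence of silent `τ`-steps. -/
def CXLTauSteps (owner : Loc → Machine) (vol : Machine → Bool) (z : Val) :
    CXLConfig Machine Loc Val → CXLConfig Machine Loc Val → Prop :=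
  Relation.ReflTransGen (fun a b => CXLStep owner vol z a .tau b)

/-- The initial configuration `γ_0`: all caches empty, all memories `0`. -/
def CXLInit (Machine Loc : Type) (z : Val) : CXLConfig Machine Loc Val :=
  ⟨fun _ _ => none, fun _ _ => z⟩

/-- Proposition 1(1): `RStore` is stronger than `LStore`. -/
theorem rstore_stronger_than_lstore
    (owner : Loc → Machine) (vol : Machine → Bool) (z : Val)
    (i k : Machine) (x : Loc) (hx : owner x = k) (v : Val)
    (γ γ' : CXLConfig Machine Loc Val)
    (h : CXLStep owner vol z γ (.RStore i x v) γ') :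
    CXLTrace owner vol z γ [.LStore i x v] γ' := by
  cases h with
  | rstore =>
    by_cases hi : i = owner x
    · have : (⟨fun j y => if y = x then (if j = owner x then some v else none)
          else γ.cache j y, γ.mem⟩ : CXLConfig Machine Loc Val)
        = ⟨fun j y => if y = x then (if j = i then some v else none)
          else γ.cache j y, γ.mem⟩ := by
        subst hi; rfl
      rw [this]
      exact .cons (.lstore γ i x v) (.nil _)
    · refine .cons (.lstore γ i x v) (.tau (CXLStep.prop_cache_cache _ i x v hi ?_) ?_)
      · simp
      · have : (⟨fun j y => if y = x then
            (if j = owner x then some v else if j = i then none else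
              (if y = x then (if j = i then some v else none) else γ.cache j y))
            else (if y = x then (if j = i then some v else none) else γ.cache j y),
            γ.mem⟩ : CXLConfig Machine Loc Val)
          = ⟨fun j y => if y = x then (if j = owner x then some v else none)
            else γ.cache j y, γ.mem⟩ := by
          congr 1
          funext j y
          by_cases hy : y = x <;> simp [hy]
          by_cases hj : j = owner x <;> by_cases hji : j = i <;>
            simp [hj, hji]
        rw [this]
        exact .nil _
end

section
/- (Proposition 1(3): MStore is stronger than RStore) For any machine i, any location x, any value v, and any configurations γ, γ': if γ →^{MStore_i(x,v)} γ', then γ ⇒^{RStore_i(x,v)} γ', i.e., γ' is reachable from γ by a transition sequence consisting of RStore_i(x,v) possibly interleaved with silent τ-steps. -/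
variable {Machine Loc Val : Type} [DecidableEq Machine] [DecidableEq Loc]

/-- Proposition 1(3): `MStore` is stronger than `RStore`. -/
theorem mstore_stronger_than_rstore
    (owner : Loc → Machine) (vol : Machine → Bool) (z : Val)
    (i : Machine) (x : Loc) (v : Val)
    (γ γ' : CXLConfig Machine Loc Val)
    (h : CXLStep owner vol z γ (.MStore i x v) γ') :
    CXLTrace owner vol z γ [.RStore i x v] γ' := by
  cases h with
  | mstore =>
    refine CXLTrace.cons (CXLStep.rstore γ i x v) ?_
    have hstep := CXLStep.prop_cache_mem (owner := owner) (vol := vol) (z := z)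
      ⟨fun j y => if y = x then (if j = owner x then some v else none) else γ.cache j y,
       γ.mem⟩ x v (by simp)
    convert CXLTrace.tau hstep (CXLTrace.nil _) using 2
    funext j y
    by_cases hy : y = x <;> simp [hy]
end

section
/- (Proposition 1(7): RStore by a non-owner is simulated by LStore followed by LFlush) For any machines j, k with j ≠ k, any location x ∈ Loc_k, any value v, and any configurations γ, γ': if γ ⇒^{LStore_j(x,v)·LFlush_j(x)} γ' (a transition labeled LStore_j(x,v), then one labeled LFlush_j(x), possibly interleaved with silent τ-steps), then γ ⇒^{RStore_j(x,v)} γ'. -/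
variable {Machine Loc Val : Type} [DecidableEq Machine] [DecidableEq Loc]

section Aux

variable (owner : Loc → Machine) (vol : Machine → Bool) (z : Val)

lemma tauSteps_trace {γ γ' γ'' : CXLConfig Machine Loc Val}
    {ls : List (CXLLabel Machine Loc Val)}
    (h : CXLTauSteps owner vol z γ γ') (ht : CXLTrace owner vol z γ' ls γ'') :
    CXLTrace owner vol z γ ls γ'' := by
  induction h using Relation.ReflTransGen.head_induction_on with
  | refl => exact ht
  | head s _ ih => exact .tau s ih

lemma trace_cons_decomp {γ γ'' : CXLConfig Machine Loc Val}
    {L : List (CXLLabel Machine Loc Val)}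
    (h : CXLTrace owner vol z γ L γ'') :
    ∀ l ls, L = l :: ls → ∃ γa γb, CXLTauSteps owner vol z γ γa ∧
      CXLStep owner vol z γa l γb ∧ CXLTrace owner vol z γb ls γ'' := by
  induction h with
  | nil => intro l ls h; exact absurd h (by simp)
  | tau s _ ih =>
    intro l ls hL
    obtain ⟨γa, γb, h1, h2, h3⟩ := ih l ls hL
    exact ⟨γa, γb, .head s h1, h2, h3⟩
  | cons s ht _ =>
    intro l ls hL
    obtain ⟨rfl, rfl⟩ : _ ∧ _ := by injection hL with a b; exact ⟨a.symm, b.symm⟩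
    exact ⟨_, _, .refl, s, ht⟩

lemma trace_nil_tauSteps {γ γ' : CXLConfig Machine Loc Val}
    (h : CXLTrace owner vol z γ [] γ') : CXLTauSteps owner vol z γ γ' := by
  generalize hL : ([] : List (CXLLabel Machine Loc Val)) = L at h
  induction h with
  | nil => exact .refl
  | tau s _ ih => exact .head s (ih hL)
  | cons s ht _ => exact absurd hL (by simp)

/-- The configuration obtained from `γ` by overwriting the cache entries at
location `x` so that the owner holds `some v` and everyone else `none`. -/
def Tconf (x : Loc) (v : Val) (γ : CXLConfig Machine Loc Val) :
    CXLConfig Machine Loc Val :=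
  ⟨fun i y => if y = x then (if i = owner x then some v else none) else γ.cache i y,
   γ.mem⟩

lemma key_lemma {j : Machine} {x : Loc} {v : Val} (hj : j ≠ owner x)
    {γ1 γ2 : CXLConfig Machine Loc Val}
    (hs : CXLTauSteps owner vol z γ1 γ2)
    (h1j : γ1.cache j x = some v) (h1 : ∀ i, i ≠ j → γ1.cache i x = none) :
    (γ2.cache j x = some v ∧ (∀ i, i ≠ j → γ2.cache i x = none) ∧
      CXLTauSteps owner vol z (Tconf owner x v γ1) (Tconf owner x v γ2)) ∨
    CXLTauSteps owner vol z (Tconf owner x v γ1) γ2 := by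
  induction hs with
  | refl => exact Or.inl ⟨h1j, h1, .refl⟩
  | @tail b c hs' step ih =>
    rcases ih with ⟨hbj, hbo, hT⟩ | hT
    · cases step with
      | prop_cache_cache i y w hik hiv =>
        by_cases hyx : y = x
        · have hij : i = j := by
            by_contra hne
            rw [hyx, hbo i hne] at hiv
            exact absurd hiv (by simp)
          have hwv : w = v := by rw [hyx, hij, hbj] at hiv; exact (Option.some_inj.mp hiv).symm
          right
          have heq : (⟨fun j' y' => if y' = y then
                (if j' = owner y then some w else if j' = i then none else b.cache j' y')
              else b.cache j' y', b.mem⟩ : CXLConfig Machine Loc Val)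
              = Tconf owner x v b := by
            subst hyx hij hwv
            unfold Tconf
            congr 1
            funext i' y'
            by_cases h1 : y' = y
            · by_cases h2 : i' = owner y
              · simp [h1, h2]
              · by_cases h3 : i' = i
                · simp [h1, h2, h3]
                · simp [h1, h2, h3, hbo i' h3]
            · simp [h1]
          rw [heq]
          exact hT
        · left
          have hxy : x ≠ y := fun h => hyx h.symm
          refine ⟨?_, ?_, ?_⟩
          · simpa [hxy] using hbj
          · intro i' hi'
            simpa [hxy] using hbo i' hi'
          · have s2 := CXLStep.prop_cache_cache (owner := owner) (vol := vol) (z := z)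
              (Tconf owner x v b) i y w hik (by simp [Tconf, hyx, hiv])
            have heq : (⟨fun j' y' => if y' = y then
                  (if j' = owner y then some w else if j' = i then none
                    else (Tconf owner x v b).cache j' y')
                else (Tconf owner x v b).cache j' y', (Tconf owner x v b).mem⟩ :
                CXLConfig Machine Loc Val)
                = Tconf owner x v ⟨fun j' y' => if y' = y then
                    (if j' = owner y then some w else if j' = i then none
                      else b.cache j' y') else b.cache j' y', b.mem⟩ := by
              unfold Tconf
              congr 1
              funext i' y'
              by_cases h1 : y' = y
              · have h2 : y' ≠ x := fun hh => hyx (h1.symm.trans hh)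
                simp [h1, h2, hyx]
              · by_cases h2 : y' = x <;> simp [h1, h2, hyx, hxy]
            rw [heq] at s2
            exact hT.tail s2
      | prop_cache_mem y w hcv =>
        by_cases hyx : y = x
        · rw [hyx, hbo (owner x) (Ne.symm hj)] at hcv
          exact absurd hcv (by simp)
        · left
          have hxy : x ≠ y := fun h => hyx h.symm
          refine ⟨?_, ?_, ?_⟩
          · simpa [hxy] using hbj
          · intro i' hi'
            simpa [hxy] using hbo i' hi'
          · have s2 := CXLStep.prop_cache_mem (owner := owner) (vol := vol) (z := z)
              (Tconf owner x v b) y w (by simp [Tconf, hyx, hcv])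
            have heq : (⟨fun j' y' => if y' = y then none
                  else (Tconf owner x v b).cache j' y',
                fun j' y' => if j' = owner y ∧ y' = y then w
                  else (Tconf owner x v b).mem j' y'⟩ :
                CXLConfig Machine Loc Val)
                = Tconf owner x v ⟨fun j' y' => if y' = y then none else b.cache j' y',
                    fun j' y' => if j' = owner y ∧ y' = y then w else b.mem j' y'⟩ := by
              unfold Tconf
              congr 1
              funext i' y'
              by_cases h1 : y' = y
              · have h2 : y' ≠ x := fun hh => hyx (h1.symm.trans hh)
                simp [h1, h2, hyx]
              · by_cases h2 : y' = x <;> simp [h1, h2, hyx, hxy]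
            rw [heq] at s2
            exact hT.tail s2
    · exact Or.inr (hT.tail step)

end Aux

/-- Proposition 1(7): `RStore` by a non-owner is simulated by `LStore`
followed by `LFlush`. -/
theorem rstore_simulated_by_lstore_lflush
    (owner : Loc → Machine) (vol : Machine → Bool) (z : Val)
    (j k : Machine) (hjk : j ≠ k) (x : Loc) (hx : owner x = k) (v : Val)
    (γ γ' : CXLConfig Machine Loc Val)
    (h : CXLTrace owner vol z γ [.LStore j x v, .LFlush j x] γ') :
    CXLTrace owner vol z γ [.RStore j x v] γ' := by
  obtain ⟨γa, γb, hs1, hst, ht⟩ := trace_cons_decomp owner vol z h _ _ rfl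
  cases hst with
  | lstore _ _ _ =>
    obtain ⟨γc, γd, hs2, hfl, ht2⟩ := trace_cons_decomp owner vol z ht _ _ rfl
    cases hfl with
    | lflush _ _ hc =>
      have hnil := trace_nil_tauSteps owner vol z ht2
      have hj' : j ≠ owner x := by rw [hx]; exact hjk
      have h1j : (⟨fun j' y => if y = x then (if j' = j then some v else none)
          else γa.cache j' y, γa.mem⟩ : CXLConfig Machine Loc Val).cache j x = some v := by
        simp
      have h1 : ∀ i, i ≠ j → (⟨fun j' y => if y = x then (if j' = j then some v else none)
          else γa.cache j' y, γa.mem⟩ : CXLConfig Machine Loc Val).cache i x = none := by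
        intro i hi; simp [hi]
      rcases key_lemma owner vol z hj' hs2 h1j h1 with ⟨hc2, _, _⟩ | hT
      · rw [hc] at hc2; exact absurd hc2 (by simp)
      · have heq : Tconf owner x v (⟨fun j' y => if y = x then
              (if j' = j then some v else none) else γa.cache j' y, γa.mem⟩ :
              CXLConfig Machine Loc Val)
            = ⟨fun j' y => if y = x then (if j' = owner x then some v else none)
                else γa.cache j' y, γa.mem⟩ := by
          unfold Tconf
          congr 1
          funext i y
          by_cases h1 : y = x <;> simp [h1]
        refine tauSteps_trace owner vol z hs1
          (.cons (CXLStep.rstore γa j x v) ?_)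
        refine tauSteps_trace owner vol z ?_ (CXLTrace.nil γ')
        rw [← heq]
        exact hT.trans hnil
end

section
/- (Proposition 1(8): MStore is simulated by LStore followed by RFlush) For any machine i, any location x, any value v, and any configurations γ, γ': if γ ⇒^{LStore_i(x,v)·RFlush_i(x)} γ' (a transition labeled LStore_i(x,v), then one labeled RFlush_i(x), possibly interleaved with silent τ-steps), then γ ⇒^{MStore_i(x,v)} γ'. -/
variable {Machine Loc Val : Type} [DecidableEq Machine] [DecidableEq Loc]

/-! The configuration `γ.mstore owner x v` reached by `MStore_i(x,v)` is a function of `γ` that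
turns every silent step into at most one silent step: propagating the cached copy of `x`
becomes invisible, and every other propagation commutes with the store. The `LStore_i(x,v)`
step has the same image as the state it starts from. Along the silent steps between `LStore`
and `RFlush`, every cached copy of `x` holds `v`, and memory holds `v` once no copy is left;
at the `RFlush` no copy is left, so the configuration reached there is its own image. -/

@[ext]
theorem CXLConfig.ext {M L V : Type} {γ δ : CXLConfig M L V} (hcache : γ.cache = δ.cache)
    (hmem : γ.mem = δ.mem) : γ = δ := by
  cases γ; cases δ; congr

namespace CXLConfig

variable (owner : Loc → Machine)

def mstore (x : Loc) (v : Val) (γ : CXLConfig Machine Loc Val) : CXLConfig Machine Loc Val :=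
  ⟨fun j y => if y = x then none else γ.cache j y,
   fun j y => if j = owner x ∧ y = x then v else γ.mem j y⟩

/-- Every load of `x` in `γ` returns `v`. -/
def HoldsValue (x : Loc) (v : Val) (γ : CXLConfig Machine Loc Val) : Prop :=
  (∀ j w, γ.cache j x = some w → w = v) ∧ ((∀ j, γ.cache j x = none) → γ.mem (owner x) x = v)

variable {owner}

@[simp]
theorem mstore_cache (x : Loc) (v : Val) (γ : CXLConfig Machine Loc Val) (j : Machine) (y : Loc) :
    (γ.mstore owner x v).cache j y = if y = x then none else γ.cache j y := rfl

@[simp]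
theorem mstore_mem (x : Loc) (v : Val) (γ : CXLConfig Machine Loc Val) (j : Machine) (y : Loc) :
    (γ.mstore owner x v).mem j y = if j = owner x ∧ y = x then v else γ.mem j y := rfl

theorem HoldsValue.mstore_eq_self {x : Loc} {v : Val} {γ : CXLConfig Machine Loc Val}
    (hγ : γ.HoldsValue owner x v) (hx : ∀ j, γ.cache j x = none) : γ.mstore owner x v = γ := by
  ext j y : 3
  · simp only [mstore_cache]
    split_ifs with hy
    · rw [hy, hx]
    · rfl
  · simp only [mstore_mem]
    split_ifs with hjy
    · obtain ⟨rfl, rfl⟩ := hjy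
      exact (hγ.2 hx).symm
    · rfl

end CXLConfig

section Steps

variable {owner : Loc → Machine} {vol : Machine → Bool} {z : Val}

open CXLConfig

theorem CXLStep.tauSteps_map_mstore {ε ε' : CXLConfig Machine Loc Val} (x : Loc) (v : Val)
    (hs : CXLStep owner vol z ε .tau ε') :
    CXLTauSteps owner vol z (ε.mstore owner x v) (ε'.mstore owner x v) := by
  unfold CXLTauSteps
  cases hs with
  | prop_cache_cache i y w hik h =>
    by_cases hyx : y = x
    · subst hyx
      convert Relation.ReflTransGen.refl using 1
      ext j y' <;> simp only [mstore_cache, mstore_mem]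
      split_ifs <;> rfl
    · refine .single ?_
      convert prop_cache_cache (ε.mstore owner x v) i y w hik (by simpa [hyx] using h) using 1
      ext j y' <;> simp only [mstore_cache, mstore_mem]
      split_ifs <;> simp_all
  | prop_cache_mem y w h =>
    by_cases hyx : y = x
    · subst hyx
      convert Relation.ReflTransGen.refl using 1
      ext j y' <;> simp only [mstore_cache, mstore_mem] <;> split_ifs <;> simp_all
    · refine .single ?_
      convert prop_cache_mem (ε.mstore owner x v) y w (by simpa [hyx] using h) using 1
      ext j y' <;> simp only [mstore_cache, mstore_mem] <;> split_ifs <;> simp_all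

theorem CXLTauSteps.map_mstore {ε ε' : CXLConfig Machine Loc Val} (x : Loc) (v : Val)
    (hs : CXLTauSteps owner vol z ε ε') :
    CXLTauSteps owner vol z (ε.mstore owner x v) (ε'.mstore owner x v) :=
  Relation.ReflTransGen.lift' (mstore owner x v) (fun _ _ h => h.tauSteps_map_mstore x v) _ _ hs

theorem CXLConfig.HoldsValue.of_tau {ε ε' : CXLConfig Machine Loc Val} {x : Loc} {v : Val}
    (hε : ε.HoldsValue owner x v) (hs : CXLStep owner vol z ε .tau ε') :
    ε'.HoldsValue owner x v := by
  obtain ⟨hcached, hmem⟩ := hε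
  cases hs with
  | prop_cache_cache i y w hik h =>
    by_cases hyx : y = x
    · subst hyx
      refine ⟨fun j w' hj => ?_, fun hnone => by simpa using hnone (owner y)⟩
      simp only [if_true] at hj
      split_ifs at hj
      · exact (Option.some.inj hj).symm.trans (hcached i w h)
      · exact hcached j w' hj
    · simpa [HoldsValue, Ne.symm hyx] using And.intro hcached hmem
  | prop_cache_mem y w h =>
    by_cases hyx : y = x
    · subst hyx
      exact ⟨by simp, fun _ => by simpa using hcached _ w h⟩
    · simpa [HoldsValue, hyx, Ne.symm hyx] using And.intro hcached hmem

theorem CXLConfig.HoldsValue.of_tauSteps {ε ε' : CXLConfig Machine Loc Val} {x : Loc} {v : Val}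
    (hε : ε.HoldsValue owner x v) (hs : CXLTauSteps owner vol z ε ε') :
    ε'.HoldsValue owner x v := by
  induction hs with
  | refl => exact hε
  | tail _ hstep ih => exact ih.of_tau hstep

theorem CXLStep.holdsValue_of_lstore {γ δ : CXLConfig Machine Loc Val} {i : Machine} {x : Loc}
    {v : Val} (hs : CXLStep owner vol z γ (.LStore i x v) δ) : δ.HoldsValue owner x v := by
  cases hs
  refine ⟨fun j w hj => ?_, fun hnone => by simpa using hnone i⟩
  simp only [if_true] at hj
  split_ifs at hj
  exact (Option.some.inj hj).symm

theorem CXLStep.mstore_of_lstore {γ δ : CXLConfig Machine Loc Val} {i : Machine} {x : Loc}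
    {v : Val} (hs : CXLStep owner vol z γ (.LStore i x v) δ) :
    δ.mstore owner x v = γ.mstore owner x v := by
  cases hs
  ext j y <;> simp only [mstore_cache, mstore_mem]
  split_ifs <;> rfl

theorem CXLStep.rflush_inv {γ δ : CXLConfig Machine Loc Val} {i : Machine} {x : Loc}
    (hs : CXLStep owner vol z γ (.RFlush i x) δ) : δ = γ ∧ ∀ j, γ.cache j x = none := by
  cases hs with
  | rflush _ _ h => exact ⟨rfl, h⟩

end Steps

section Traces

variable {owner : Loc → Machine} {vol : Machine → Bool} {z : Val}
  {γ γ' γ'' : CXLConfig Machine Loc Val} {l : CXLLabel Machine Loc Val}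
  {ls : List (CXLLabel Machine Loc Val)}

theorem CXLTauSteps.trace (h : CXLTauSteps owner vol z γ γ')
    (ht : CXLTrace owner vol z γ' ls γ'') : CXLTrace owner vol z γ ls γ'' := by
  induction h using Relation.ReflTransGen.head_induction_on with
  | refl => exact ht
  | head hstep _ ih => exact .tau hstep ih

theorem CXLTrace.nil_iff : CXLTrace owner vol z γ [] γ' ↔ CXLTauSteps owner vol z γ γ' := by
  refine ⟨fun h => ?_, fun h => h.trace (.nil γ')⟩
  generalize hls : ([] : List (CXLLabel Machine Loc Val)) = ls at h
  induction h with
  | nil => exact .refl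
  | tau hstep _ ih => exact .head hstep (ih hls)
  | cons => cases hls

theorem CXLTrace.cons_iff :
    CXLTrace owner vol z γ (l :: ls) γ' ↔ ∃ γ₁ γ₂, CXLTauSteps owner vol z γ γ₁ ∧
      CXLStep owner vol z γ₁ l γ₂ ∧ CXLTrace owner vol z γ₂ ls γ' := by
  refine ⟨fun h => ?_, fun ⟨_, _, hτ, hs, ht⟩ => hτ.trace (.cons hs ht)⟩
  generalize hls : l :: ls = L at h
  induction h with
  | nil => cases hls
  | tau hstep _ ih =>
    obtain ⟨γ₁, γ₂, hτ, hs, ht⟩ := ih hls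
    exact ⟨γ₁, γ₂, .head hstep hτ, hs, ht⟩
  | cons hs ht =>
    cases hls
    exact ⟨_, _, .refl, hs, ht⟩

end Traces

/-- Proposition 1(8): `MStore` is simulated by `LStore` followed by `RFlush`. -/
theorem mstore_simulated_by_lstore_rflush
    (owner : Loc → Machine) (vol : Machine → Bool) (z : Val)
    (i : Machine) (x : Loc) (v : Val)
    (γ γ' : CXLConfig Machine Loc Val)
    (h : CXLTrace owner vol z γ [.LStore i x v, .RFlush i x] γ') :
    CXLTrace owner vol z γ [.MStore i x v] γ' := by
  obtain ⟨γ₁, δ, hτ₁, hL, hrest⟩ := CXLTrace.cons_iff.mp h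
  obtain ⟨ε', ε, hτ₂, hR, hτ₃⟩ := CXLTrace.cons_iff.mp hrest
  obtain ⟨rfl, hx⟩ := hR.rflush_inv
  have hε : ε.HoldsValue owner x v := hL.holdsValue_of_lstore.of_tauSteps hτ₂
  have hsim : CXLTauSteps owner vol z (γ₁.mstore owner x v) ε := by
    rw [← hL.mstore_of_lstore, ← hε.mstore_eq_self hx]
    exact hτ₂.map_mstore x v
  exact CXLTrace.cons_iff.mpr ⟨γ₁, _, hτ₁, .mstore γ₁ i x v,
    CXLTrace.nil_iff.mpr (Relation.ReflTransGen.trans hsim (CXLTrace.nil_iff.mp hτ₃))⟩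
end

section
/- (Litmus test 2: persisted store survives local crash) Assume machine 1's memory is non-volatile, x ∈ Loc_1, and 1 is a value in Val with 1 ≠ 0. Then there is no configuration γ' such that γ_0 ⇒^{MStore_1(x,1)·Crash_1·Load_1(x,0)} γ', i.e., no execution from the initial configuration performs MStore_1(x,1), then Crash_1, then Load_1(x,0), possibly interleaved with silent τ-steps. -/
variable {Machine Loc Val : Type} [DecidableEq Machine] [DecidableEq Loc]

/-- Invariant: the persisted value `one` is in memory at `x`, and every
cache either has no entry or holds `one` at `x`. -/
def CXLInv (owner : Loc → Machine) (x : Loc) (one : Val)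
    (γ : CXLConfig Machine Loc Val) : Prop :=
  γ.mem (owner x) x = one ∧ ∀ j, γ.cache j x = none ∨ γ.cache j x = some one

lemma cxl_tau_preserves {owner : Loc → Machine} {vol : Machine → Bool} {z : Val}
    {γ γ' : CXLConfig Machine Loc Val} (h : CXLStep owner vol z γ .tau γ')
    {x : Loc} {one : Val} (hi : CXLInv owner x one γ) : CXLInv owner x one γ' := by
  obtain ⟨hm, hc⟩ := hi
  cases h with
  | prop_cache_cache i y v hik hcy =>
      refine ⟨hm, fun j => ?_⟩
      dsimp only
      by_cases hxy : x = y
      · subst hxy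
        rcases hc i with h0 | h0
        · rw [h0] at hcy; cases hcy
        · rw [h0] at hcy
          simp only [if_pos rfl]
          rcases eq_or_ne j (owner x) with hj | hj
          · cases Option.some.inj hcy; simp [hj]
          · simp only [if_neg hj]
            by_cases hji : j = i
            · simp [hji]
            · simp only [if_neg hji]; exact hc j
      · simp only [if_neg hxy]; exact hc j
  | prop_cache_mem y v hcy =>
      constructor
      · dsimp only
        by_cases hxy : x = y
        · subst hxy
          rcases hc (owner x) with h0 | h0
          · rw [h0] at hcy; cases hcy
          · rw [h0] at hcy
            cases Option.some.inj hcy; simp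
        · rw [if_neg]
          · exact hm
          · rintro ⟨-, rfl⟩; exact hxy rfl
      · intro j; dsimp only
        by_cases hxy : x = y
        · simp [hxy]
        · simp only [if_neg hxy]; exact hc j

lemma cxl_key {owner : Loc → Machine} {vol : Machine → Bool} {z : Val}
    {m1 : Machine} {x : Loc} {one : Val}
    (hx : owner x = m1) (hnv : vol m1 = false) (hone : one ≠ z) :
    ∀ {γ γ' : CXLConfig Machine Loc Val} {ls},
      CXLTrace owner vol z γ ls γ' → CXLInv owner x one γ →
      (ls = [CXLLabel.Crash m1, CXLLabel.Load m1 x z] ∨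
        ls = [CXLLabel.Load m1 x z]) → False := by
  intro γ γ' ls ht
  induction ht with
  | nil => rintro _ (h | h) <;> cases h
  | tau h _ ih => exact fun hi hls => ih (cxl_tau_preserves h hi) hls
  | cons h _ ih =>
      rintro hi (hls | hls) <;>
        injection hls with h1 h2 <;> subst h1 <;> subst h2
      · -- crash step
        cases h with
        | crash i =>
            refine ih ⟨?_, fun j => ?_⟩ (Or.inr rfl)
            · dsimp only
              rw [if_neg]
              · exact hi.1
              · rintro ⟨-, hvol⟩; rw [hnv] at hvol; cases hvol
            · dsimp only
              by_cases hj : j = m1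
              · simp [hj]
              · simp only [if_neg hj]; exact hi.2 j
      · -- load step
        cases h with
        | load_cache a b c d hcy =>
            rcases hi.2 b with h0 | h0 <;> rw [h0] at hcy
            · cases hcy
            · exact hone (Option.some.inj hcy)
        | load_mem a b c hcall hmem =>
            exact hone (hi.1 ▸ hmem)

/-- Litmus test 2: a persisted store (`MStore`) to an owned non-volatile
location survives a local crash. -/
theorem litmus_mstore_survives_crash
    (owner : Loc → Machine) (vol : Machine → Bool) (z : Val)
    (m1 : Machine) (x : Loc) (hx : owner x = m1) (hnv : vol m1 = false)
    (one : Val) (hone : one ≠ z) :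
    ¬ ∃ γ' : CXLConfig Machine Loc Val,
      CXLTrace owner vol z (CXLInit Machine Loc z)
        [.MStore m1 x one, .Crash m1, .Load m1 x z] γ' := by
  rintro ⟨γ', ht⟩
  generalize hγ0 : CXLInit (Val := Val) Machine Loc z = γ0 at ht
  clear hγ0
  generalize hls : [CXLLabel.MStore m1 x one, CXLLabel.Crash m1,
      CXLLabel.Load m1 x z] = ls at ht
  induction ht with
  | nil => cases hls
  | tau h _ ih => exact ih hls
  | cons h ht _ =>
      injection hls with h1 h2
      subst h1; subst h2
      cases h with
      | mstore a b c =>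
          refine cxl_key hx hnv hone ht ⟨?_, fun j => ?_⟩ (Or.inl rfl)
          · simp
          · simp
end

section
/- (Litmus test 3: locally flushed store to owned location survives local crash) Assume machine 1's memory is non-volatile, x ∈ Loc_1, and 1 is a value in Val with 1 ≠ 0. Then there is no configuration γ' such that γ_0 ⇒^{LStore_1(x,1)·LFlush_1(x)·Crash_1·Load_1(x,0)} γ', i.e., no execution from the initial configuration performs LStore_1(x,1), then LFlush_1(x), then Crash_1, then Load_1(x,0), possibly interleaved with silent τ-steps. -/
variable {Machine Loc Val : Type} [DecidableEq Machine] [DecidableEq Loc]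

private lemma cxl_trace_cons {owner : Loc → Machine} {vol : Machine → Bool} {z : Val}
    {γ γ'' : CXLConfig Machine Loc Val} {l : CXLLabel Machine Loc Val}
    {ls : List (CXLLabel Machine Loc Val)}
    (h : CXLTrace owner vol z γ (l :: ls) γ'') :
    ∃ δ δ' : CXLConfig Machine Loc Val, CXLTauSteps owner vol z γ δ ∧
      CXLStep owner vol z δ l δ' ∧ CXLTrace owner vol z δ' ls γ'' := by
  generalize hE : (l :: ls) = L at h
  induction h with
  | nil => cases hE
  | tau hs ht ih =>
      obtain ⟨δ, δ', h1, h2, h3⟩ := ih hE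
      exact ⟨δ, δ', Relation.ReflTransGen.head hs h1, h2, h3⟩
  | cons hs ht =>
      cases hE
      exact ⟨_, _, Relation.ReflTransGen.refl, hs, ht⟩

private lemma cxl_tau_P {owner : Loc → Machine} {vol : Machine → Bool} {z : Val}
    {m1 : Machine} {x : Loc} (hx : owner x = m1) {one : Val}
    {γ γ' : CXLConfig Machine Loc Val}
    (h : CXLStep owner vol z γ .tau γ')
    (hP : (γ.cache m1 x = some one ∧ ∀ j, j ≠ m1 → γ.cache j x = none) ∨
      ((∀ j, γ.cache j x = none) ∧ γ.mem m1 x = one)) :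
    (γ'.cache m1 x = some one ∧ ∀ j, j ≠ m1 → γ'.cache j x = none) ∨
      ((∀ j, γ'.cache j x = none) ∧ γ'.mem m1 x = one) := by
  cases h with
  | prop_cache_cache i y v hik hc =>
      by_cases hxy : x = y
      · subst hxy
        rcases hP with ⟨h1, h2⟩ | ⟨h1, h2⟩
        · exact absurd hc (by rw [h2 i (by rw [hx] at hik; exact hik)]; simp)
        · exact absurd hc (by rw [h1 i]; simp)
      · rcases hP with ⟨h1, h2⟩ | ⟨h1, h2⟩
        · left
          constructor
          · simpa [hxy] using h1
          · intro j hj; simpa [hxy] using h2 j hj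
        · right
          exact ⟨fun j => by simpa [hxy] using h1 j, h2⟩
  | prop_cache_mem y v hc =>
      by_cases hxy : x = y
      · subst hxy
        rw [hx] at hc
        rcases hP with ⟨h1, h2⟩ | ⟨h1, h2⟩
        · right
          rw [h1] at hc
          injection hc with hv
          refine ⟨fun j => by simp, ?_⟩
          simp [hx, hv]
        · exact absurd hc (by rw [h1 m1]; simp)
      · rcases hP with ⟨h1, h2⟩ | ⟨h1, h2⟩
        · left
          constructor
          · simpa [hxy] using h1
          · intro j hj; simpa [hxy] using h2 j hj
        · right
          refine ⟨fun j => by simpa [hxy] using h1 j, ?_⟩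
          simpa [hxy] using h2

private lemma cxl_tau_Q {owner : Loc → Machine} {vol : Machine → Bool} {z : Val}
    {m1 : Machine} {x : Loc} (hx : owner x = m1) {one : Val}
    {γ γ' : CXLConfig Machine Loc Val}
    (h : CXLStep owner vol z γ .tau γ')
    (h1 : ∀ j, γ.cache j x = none) (h2 : γ.mem m1 x = one) :
    (∀ j, γ'.cache j x = none) ∧ γ'.mem m1 x = one := by
  cases h with
  | prop_cache_cache i y v hik hc =>
      by_cases hxy : x = y
      · subst hxy; exact absurd hc (by rw [h1 i]; simp)
      · exact ⟨fun j => by simpa [hxy] using h1 j, h2⟩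
  | prop_cache_mem y v hc =>
      by_cases hxy : x = y
      · subst hxy; exact absurd hc (by rw [h1 (owner x)]; simp)
      · exact ⟨fun j => by simpa [hxy] using h1 j, by simpa [hxy] using h2⟩

private lemma cxl_taus_P {owner : Loc → Machine} {vol : Machine → Bool} {z : Val}
    {m1 : Machine} {x : Loc} (hx : owner x = m1) {one : Val}
    {γ γ' : CXLConfig Machine Loc Val}
    (h : CXLTauSteps owner vol z γ γ')
    (hP : (γ.cache m1 x = some one ∧ ∀ j, j ≠ m1 → γ.cache j x = none) ∨
      ((∀ j, γ.cache j x = none) ∧ γ.mem m1 x = one)) :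
    (γ'.cache m1 x = some one ∧ ∀ j, j ≠ m1 → γ'.cache j x = none) ∨
      ((∀ j, γ'.cache j x = none) ∧ γ'.mem m1 x = one) := by
  induction h with
  | refl => exact hP
  | tail _ hs ih => exact cxl_tau_P hx hs ih

private lemma cxl_taus_Q {owner : Loc → Machine} {vol : Machine → Bool} {z : Val}
    {m1 : Machine} {x : Loc} (hx : owner x = m1) {one : Val}
    {γ γ' : CXLConfig Machine Loc Val}
    (h : CXLTauSteps owner vol z γ γ')
    (h1 : ∀ j, γ.cache j x = none) (h2 : γ.mem m1 x = one) :
    (∀ j, γ'.cache j x = none) ∧ γ'.mem m1 x = one := by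
  induction h with
  | refl => exact ⟨h1, h2⟩
  | tail _ hs ih => exact cxl_tau_Q hx hs ih.1 ih.2

/-- Litmus test 3: a locally flushed store to an owned non-volatile location
survives a local crash. -/
theorem litmus_lflushed_store_survives_crash
    (owner : Loc → Machine) (vol : Machine → Bool) (z : Val)
    (m1 : Machine) (x : Loc) (hx : owner x = m1) (hnv : vol m1 = false)
    (one : Val) (hone : one ≠ z) :
    ¬ ∃ γ' : CXLConfig Machine Loc Val,
      CXLTrace owner vol z (CXLInit Machine Loc z)
        [.LStore m1 x one, .LFlush m1 x, .Crash m1, .Load m1 x z] γ' := by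
  rintro ⟨γf, htr⟩
  obtain ⟨δ0, γ1, _, hstore, htr⟩ := cxl_trace_cons htr
  have hP1 : (γ1.cache m1 x = some one ∧ ∀ j, j ≠ m1 → γ1.cache j x = none) ∨
      ((∀ j, γ1.cache j x = none) ∧ γ1.mem m1 x = one) := by
    cases hstore with
    | lstore _ _ _ =>
        left
        exact ⟨by simp, fun j hj => by simp [hj]⟩
  obtain ⟨δ1, γ2, htau1, hflush, htr⟩ := cxl_trace_cons htr
  have hP2 := cxl_taus_P hx htau1 hP1
  have hQ2 : (∀ j, γ2.cache j x = none) ∧ γ2.mem m1 x = one := by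
    cases hflush with
    | lflush _ _ hc =>
        rcases hP2 with ⟨h1, _⟩ | hQ
        · rw [hc] at h1; cases h1
        · exact hQ
  obtain ⟨δ2, γ3, htau2, hcrash, htr⟩ := cxl_trace_cons htr
  have hQ2' := cxl_taus_Q hx htau2 hQ2.1 hQ2.2
  have hQ3 : (∀ j, γ3.cache j x = none) ∧ γ3.mem m1 x = one := by
    cases hcrash with
    | crash _ =>
        refine ⟨fun j => ?_, ?_⟩
        · by_cases hji : j = m1 <;> simp [hji, hQ2'.1 j]
        · simp [hnv, hQ2'.2]
  obtain ⟨δ3, γ4, htau3, hload, _⟩ := cxl_trace_cons htr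
  have hQ3' := cxl_taus_Q hx htau3 hQ3.1 hQ3.2
  cases hload with
  | load_cache _ j _ _ hc => rw [hQ3'.1 j] at hc; cases hc
  | load_mem _ _ _ hc hm =>
      rw [hx, hQ3'.2] at hm
      exact hone hm
end

section
/- (Litmus test 4: an LFlushed store to a remote location can be lost by a remote crash) Assume machines 1 and 2 are distinct, machine 2's memory is non-volatile, x ∈ Loc_2, and 1 is a value in Val with 1 ≠ 0. Then there exists a configuration γ' such that γ_0 ⇒^{LStore_1(x,1)·LFlush_1(x)·Crash_2·Load_1(x,0)} γ', i.e., some execution from the initial configuration performs LStore_1(x,1), then LFlush_1(x), then Crash_2, then Load_1(x,0), possibly interleaved with silent τ-steps. -/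
variable {Machine Loc Val : Type} [DecidableEq Machine] [DecidableEq Loc]

/-- Litmus test 4: an `LFlush`ed store to a remote location can be lost by a
remote crash. -/
theorem litmus_lflushed_remote_store_can_be_lost
    (owner : Loc → Machine) (vol : Machine → Bool) (z : Val)
    (m1 m2 : Machine) (h12 : m1 ≠ m2) (x : Loc) (hx : owner x = m2)
    (hnv : vol m2 = false) (one : Val) (hone : one ≠ z) :
    ∃ γ' : CXLConfig Machine Loc Val,
      CXLTrace owner vol z (CXLInit Machine Loc z)
        [.LStore m1 x one, .LFlush m1 x, .Crash m2, .Load m1 x z] γ' := by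
  have hm1 : m1 ≠ owner x := by rw [hx]; exact h12
  refine ⟨_, .cons (.lstore _ m1 x one) (.tau
    (.prop_cache_cache _ m1 x one hm1 (by simp)) (.cons (.lflush _ m1 x (by simp [hm1]))
    (.cons (.crash _ m2) (.cons (.load_mem _ m1 x z ?_ ?_) (.nil _)))))⟩
  · intro j
    by_cases hj : j = m2
    · simp [hj]
    · simp only [hj, if_false, hx]
      simp [hm1]
  · simp [hx, hnv, CXLInit]
end

section
/- (Litmus test 5: an RFlushed store to a remote non-volatile location survives a remote crash) Assume machines 1 and 2 are distinct, machine 2's memory is non-volatile, x ∈ Loc_2, and 1 is a value in Val with 1 ≠ 0. Then there is no configuration γ' such that γ_0 ⇒^{LStore_1(x,1)·RFlush_1(x)·Crash_2·Load_1(x,0)} γ', i.e., no execution from the initial configuration performs LStore_1(x,1), then RFlush_1(x), then Crash_2, then Load_1(x,0), possibly interleaved with silent τ-steps. -/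
variable {Machine Loc Val : Type} [DecidableEq Machine] [DecidableEq Loc]

section Aux

variable (owner : Loc → Machine) (vol : Machine → Bool) (z : Val)

/-- Inversion of a trace with a non-empty label list. -/
theorem CXLTrace.cons_inv {γ γ'' : CXLConfig Machine Loc Val}
    {l : CXLLabel Machine Loc Val} {ls : List (CXLLabel Machine Loc Val)}
    (ht : CXLTrace owner vol z γ (l :: ls) γ'') :
    ∃ γ1 γ2, CXLTauSteps owner vol z γ γ1 ∧ CXLStep owner vol z γ1 l γ2 ∧
      CXLTrace owner vol z γ2 ls γ'' := by
  generalize hL : (l :: ls) = L at ht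
  induction ht with
  | nil => exact absurd hL (by simp)
  | tau h ht ih =>
    obtain ⟨γ1, γ2, hs, st, tr⟩ := ih hL
    exact ⟨γ1, γ2, Relation.ReflTransGen.head h hs, st, tr⟩
  | cons h ht ih =>
    cases hL
    exact ⟨_, _, Relation.ReflTransGen.refl, h, ht⟩

/-- Invariant after the store. -/
def Pinv (x : Loc) (one : Val) (γ : CXLConfig Machine Loc Val) : Prop :=
  (∀ j, γ.cache j x = none ∨ γ.cache j x = some one) ∧
  (γ.mem (owner x) x = one ∨ ∃ j, γ.cache j x = some one)

/-- Invariant after the flush. -/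
def Qinv (x : Loc) (one : Val) (γ : CXLConfig Machine Loc Val) : Prop :=
  (∀ j, γ.cache j x = none ∨ γ.cache j x = some one) ∧
  γ.mem (owner x) x = one

theorem Pinv_tau {x : Loc} {one : Val} {γ γ' : CXLConfig Machine Loc Val}
    (hP : Pinv owner x one γ) (h : CXLStep owner vol z γ .tau γ') :
    Pinv owner x one γ' := by
  cases h with
  | prop_cache_cache i y v hik hc =>
    by_cases hxy : x = y
    · subst hxy
      have hv : v = one := by
        rcases hP.1 i with h' | h' <;> rw [hc] at h'
        · exact absurd h' (by simp)
        · exact Option.some.inj h'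
      subst hv
      refine ⟨fun j => ?_, Or.inr ⟨owner x, by simp⟩⟩
      by_cases h1 : j = owner x
      · right; simp [h1]
      · by_cases h2 : j = i
        · left; simp [h1, h2, hik]
        · simpa [h1, h2] using hP.1 j
    · refine ⟨fun j => by simpa [hxy] using hP.1 j, ?_⟩
      rcases hP.2 with h' | ⟨j, h'⟩
      · exact Or.inl h'
      · exact Or.inr ⟨j, by simpa [hxy] using h'⟩
  | prop_cache_mem y v hc =>
    by_cases hxy : x = y
    · subst hxy
      have hv : v = one := by
        rcases hP.1 (owner x) with h' | h' <;> rw [hc] at h'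
        · exact absurd h' (by simp)
        · exact Option.some.inj h'
      subst hv
      exact ⟨fun j => Or.inl (by simp), Or.inl (by simp)⟩
    · refine ⟨fun j => by simpa [hxy] using hP.1 j, ?_⟩
      rcases hP.2 with h' | ⟨j, h'⟩
      · exact Or.inl (by simpa [hxy] using h')
      · exact Or.inr ⟨j, by simpa [hxy] using h'⟩

theorem Qinv_tau {x : Loc} {one : Val} {γ γ' : CXLConfig Machine Loc Val}
    (hQ : Qinv owner x one γ) (h : CXLStep owner vol z γ .tau γ') :
    Qinv owner x one γ' := by
  cases h with
  | prop_cache_cache i y v hik hc =>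
    by_cases hxy : x = y
    · subst hxy
      have hv : v = one := by
        rcases hQ.1 i with h' | h' <;> rw [hc] at h'
        · exact absurd h' (by simp)
        · exact Option.some.inj h'
      subst hv
      refine ⟨fun j => ?_, hQ.2⟩
      by_cases h1 : j = owner x
      · right; simp [h1]
      · by_cases h2 : j = i
        · left; simp [h1, h2, hik]
        · simpa [h1, h2] using hQ.1 j
    · exact ⟨fun j => by simpa [hxy] using hQ.1 j, hQ.2⟩
  | prop_cache_mem y v hc =>
    by_cases hxy : x = y
    · subst hxy
      have hv : v = one := by
        rcases hQ.1 (owner x) with h' | h' <;> rw [hc] at h'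
        · exact absurd h' (by simp)
        · exact Option.some.inj h'
      subst hv
      exact ⟨fun j => Or.inl (by simp), by simp⟩
    · exact ⟨fun j => by simpa [hxy] using hQ.1 j, by simpa [hxy] using hQ.2⟩

theorem Pinv_taus {x : Loc} {one : Val} {γ γ' : CXLConfig Machine Loc Val}
    (hs : CXLTauSteps owner vol z γ γ') (hP : Pinv owner x one γ) :
    Pinv owner x one γ' := by
  induction hs with
  | refl => exact hP
  | tail _ h ih => exact Pinv_tau owner vol z ih h

theorem Qinv_taus {x : Loc} {one : Val} {γ γ' : CXLConfig Machine Loc Val}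
    (hs : CXLTauSteps owner vol z γ γ') (hQ : Qinv owner x one γ) :
    Qinv owner x one γ' := by
  induction hs with
  | refl => exact hQ
  | tail _ h ih => exact Qinv_tau owner vol z ih h

end Aux

/-- Litmus test 5: an `RFlush`ed store to a remote non-volatile location
survives a remote crash. -/
theorem litmus_rflushed_remote_store_survives_crash
    (owner : Loc → Machine) (vol : Machine → Bool) (z : Val)
    (m1 m2 : Machine) (h12 : m1 ≠ m2) (x : Loc) (hx : owner x = m2)
    (hnv : vol m2 = false) (one : Val) (hone : one ≠ z) :
    ¬ ∃ γ' : CXLConfig Machine Loc Val,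
      CXLTrace owner vol z (CXLInit Machine Loc z)
        [.LStore m1 x one, .RFlush m1 x, .Crash m2, .Load m1 x z] γ' := by
  rintro ⟨γ', ht⟩
  obtain ⟨a1, b1, _, s1, tr1⟩ := ht.cons_inv
  obtain ⟨a2, b2, ht2, s2, tr2⟩ := tr1.cons_inv
  obtain ⟨a3, b3, ht3, s3, tr3⟩ := tr2.cons_inv
  obtain ⟨a4, b4, ht4, s4, _⟩ := tr3.cons_inv
  -- after the LStore, `Pinv` holds
  have hPb1 : Pinv owner x one b1 := by
    cases s1 with
    | lstore _ _ _ =>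
      refine ⟨fun j => ?_, Or.inr ⟨m1, by simp⟩⟩
      by_cases hj : j = m1
      · right; simp [hj]
      · left; simp [hj]
  have hPa2 : Pinv owner x one a2 := Pinv_taus owner vol z ht2 hPb1
  -- the RFlush forces the memory to hold `one`
  have hQb2 : Qinv owner x one b2 := by
    cases s2 with
    | rflush _ _ hall =>
      refine ⟨hPa2.1, ?_⟩
      rcases hPa2.2 with h' | ⟨j, h'⟩
      · exact h'
      · rw [hall j] at h'; exact absurd h' (by simp)
  have hQa3 : Qinv owner x one a3 := Qinv_taus owner vol z ht3 hQb2
  -- the crash preserves `Qinv` since machine 2's memory is non-volatile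
  have hQb3 : Qinv owner x one b3 := by
    cases s3 with
    | crash _ =>
      refine ⟨fun j => ?_, ?_⟩
      · by_cases hj : j = m2
        · left; simp [hj]
        · simpa [hj] using hQa3.1 j
      · simpa [hnv] using hQa3.2
  have hQa4 : Qinv owner x one a4 := Qinv_taus owner vol z ht4 hQb3
  -- the Load of `z` is impossible
  cases s4 with
  | load_cache _ j _ _ hc =>
    rcases hQa4.1 j with h' | h' <;> rw [hc] at h'
    · exact absurd h' (by simp)
    · exact hone (Option.some.inj h').symm
  | load_mem _ _ _ hall hm =>
    rw [hQa4.2] at hm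
    exact hone hm
end

section
/- (Litmus test 6: a value observed by a second machine is not lost when the writer crashes) Assume machines 1, 2 and 3 are pairwise distinct, x ∈ Loc_3, and 1 is a value in Val with 1 ≠ 0. Then there is no configuration γ' such that γ_0 ⇒^{LStore_1(x,1)·Load_2(x,1)·Crash_1·Load_2(x,0)} γ', i.e., no execution from the initial configuration performs LStore_1(x,1), then Load_2(x,1), then Crash_1, then Load_2(x,0), possibly interleaved with silent τ-steps. -/
variable {Machine Loc Val : Type} [DecidableEq Machine] [DecidableEq Loc]

/-! After `LStore₁(x,1)` every cached copy of `x` holds `1`, and a copy of `1` survives in the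
memory of the owner or in some cache. Silent steps preserve this as long as the owner's cache is
among the admissible holders, since propagation only moves a copy towards the owner. Once machine 2
has loaded `1`, a copy survives outside machine 1 (in its own cache, or in memory of machine 3),
and `Crash₁` cannot erase it; so every later load of `x` returns `1`, never `0`. -/

namespace CXLTrace

variable {owner : Loc → Machine} {vol : Machine → Bool} {z : Val}

theorem exists_of_cons {γ γ' : CXLConfig Machine Loc Val} {l : CXLLabel Machine Loc Val}
    {ls : List (CXLLabel Machine Loc Val)} (h : CXLTrace owner vol z γ (l :: ls) γ') :
    ∃ γ₁ γ₂, CXLTauSteps owner vol z γ γ₁ ∧ CXLStep owner vol z γ₁ l γ₂ ∧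
      CXLTrace owner vol z γ₂ ls γ' := by
  generalize hL : l :: ls = L at h
  induction h with
  | nil => exact absurd hL (List.cons_ne_nil _ _)
  | tau hs _ ih =>
    obtain ⟨γ₁, γ₂, hτ, hstep, htr⟩ := ih hL
    exact ⟨γ₁, γ₂, .head hs hτ, hstep, htr⟩
  | cons hs htr =>
    obtain ⟨rfl, rfl⟩ := List.cons.inj hL
    exact ⟨_, _, .refl, hs, htr⟩

end CXLTrace

def KeepsValue (owner : Loc → Machine) (S : Set Machine) (x : Loc) (v : Val)
    (γ : CXLConfig Machine Loc Val) : Prop :=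
  (∀ j w, γ.cache j x = some w → w = v) ∧
    (γ.mem (owner x) x = v ∨ ∃ j ∈ S, γ.cache j x = some v)

namespace KeepsValue

variable {owner : Loc → Machine} {vol : Machine → Bool} {z : Val} {S : Set Machine} {x : Loc}
  {v : Val} {γ γ' : CXLConfig Machine Loc Val}

theorem of_lstore {i : Machine} (hi : i ∈ S)
    (h : CXLStep owner vol z γ (.LStore i x v) γ') : KeepsValue owner S x v γ' := by
  cases h
  refine ⟨fun j w hw => ?_, .inr ⟨i, hi, by simp⟩⟩
  by_cases hj : j = i <;> simp_all

theorem load_eq {i : Machine} {w : Val} (hγ : KeepsValue owner S x v γ)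
    (h : CXLStep owner vol z γ (.Load i x w) γ') : w = v := by
  cases h with
  | load_cache _ j _ _ hj => exact hγ.1 j w hj
  | load_mem _ _ _ hnone hmem =>
    obtain hv | ⟨j, -, hj⟩ := hγ.2
    · exact hmem.symm.trans hv
    · simp [hnone j] at hj

theorem of_load {i : Machine} {T : Set Machine} (hi : i ∈ T) (hγ : KeepsValue owner S x v γ)
    (h : CXLStep owner vol z γ (.Load i x v) γ') : KeepsValue owner T x v γ' := by
  cases h with
  | load_cache =>
    refine ⟨fun k w hw => ?_, .inr ⟨i, hi, by simp⟩⟩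
    by_cases hk : k = i
    · simp_all
    · simp only [hk, false_and, if_false] at hw
      exact hγ.1 k w hw
  | load_mem _ _ _ _ hmem => exact ⟨hγ.1, .inl hmem⟩

theorem crash {i : Machine} (hiS : i ∉ S) (hix : owner x ≠ i) (hγ : KeepsValue owner S x v γ)
    (h : CXLStep owner vol z γ (.Crash i) γ') : KeepsValue owner S x v γ' := by
  cases h
  refine ⟨fun j w hw => ?_, ?_⟩
  · by_cases hj : j = i
    · simp [hj] at hw
    · simp only [hj, if_false] at hw
      exact hγ.1 j w hw
  · obtain hv | ⟨j, hj, hjv⟩ := hγ.2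
    · simp [hix, hv]
    · exact .inr ⟨j, hj, by simp [ne_of_mem_of_not_mem hj hiS, hjv]⟩

theorem tau (hS : owner x ∈ S) (hγ : KeepsValue owner S x v γ)
    (h : CXLStep owner vol z γ .tau γ') : KeepsValue owner S x v γ' := by
  cases h with
  | prop_cache_cache i y w hi hw =>
    by_cases hy : x = y
    · subst hy
      obtain rfl := hγ.1 i w hw
      refine ⟨fun j u hu => ?_, .inr ⟨owner x, hS, by simp⟩⟩
      by_cases hj : j = owner x
      · simp_all
      by_cases hj' : j = i
      · simp_all
      simp only [hj, hj', if_true, if_false] at hu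
      exact hγ.1 j u hu
    · refine ⟨fun j u hu => hγ.1 j u (by simpa [hy] using hu), ?_⟩
      obtain hv | ⟨j, hj, hjv⟩ := hγ.2
      · exact .inl hv
      · exact .inr ⟨j, hj, by simp [hy, hjv]⟩
  | prop_cache_mem y w hw =>
    by_cases hy : x = y
    · subst hy
      obtain rfl := hγ.1 _ w hw
      exact ⟨fun j u hu => by simp at hu, .inl (by simp)⟩
    · refine ⟨fun j u hu => hγ.1 j u (by simpa [hy] using hu), ?_⟩
      obtain hv | ⟨j, hj, hjv⟩ := hγ.2
      · exact .inl (by simp [hy, hv])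
      · exact .inr ⟨j, hj, by simp [hy, hjv]⟩

theorem tauSteps (hS : owner x ∈ S) (hγ : KeepsValue owner S x v γ)
    (h : CXLTauSteps owner vol z γ γ') : KeepsValue owner S x v γ' := by
  induction h with
  | refl => exact hγ
  | tail _ hstep ih => exact ih.tau hS hstep

end KeepsValue

theorem litmus_observed_value_not_lost_general
    (owner : Loc → Machine) (vol : Machine → Bool) (z : Val)
    (m1 m2 m3 : Machine) (h12 : m1 ≠ m2) (h13 : m1 ≠ m3)
    (x : Loc) (hx : owner x = m3) (one : Val) (hone : one ≠ z) :
    ¬ ∃ γ' : CXLConfig Machine Loc Val,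
      CXLTrace owner vol z (CXLInit Machine Loc z)
        [.LStore m1 x one, .Load m2 x one, .Crash m1, .Load m2 x z] γ' := by
  rintro ⟨γ', htr⟩
  obtain ⟨_, γ₁, -, hstore, htr⟩ := htr.exists_of_cons
  obtain ⟨_, γ₂, hτ₂, hload, htr⟩ := htr.exists_of_cons
  obtain ⟨_, γ₃, hτ₃, hcrash, htr⟩ := htr.exists_of_cons
  obtain ⟨_, _, hτ₄, hload', -⟩ := htr.exists_of_cons
  have hx1 : owner x ≠ m1 := hx ▸ h13.symm
  have h₁ : KeepsValue owner Set.univ x one γ₁ := .of_lstore (Set.mem_univ _) hstore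
  have h₂ : KeepsValue owner {m1}ᶜ x one γ₂ :=
    (h₁.tauSteps (Set.mem_univ _) hτ₂).of_load h12.symm hload
  have h₃ := (h₂.tauSteps hx1 hτ₃).crash (by simp) hx1 hcrash
  exact hone ((h₃.tauSteps hx1 hτ₄).load_eq hload').symm

/-- Litmus test 6: a value observed by a second machine is not lost when the
writer crashes. -/
theorem litmus_observed_value_not_lost
    (owner : Loc → Machine) (vol : Machine → Bool) (z : Val)
    (m1 m2 m3 : Machine) (h12 : m1 ≠ m2) (h13 : m1 ≠ m3) (h23 : m2 ≠ m3)
    (x : Loc) (hx : owner x = m3) (one : Val) (hone : one ≠ z) :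
    ¬ ∃ γ' : CXLConfig Machine Loc Val,
      CXLTrace owner vol z (CXLInit Machine Loc z)
        [.LStore m1 x one, .Load m2 x one, .Crash m1, .Load m2 x z] γ' :=
  litmus_observed_value_not_lost_general owner vol z m1 m2 m3 h12 h13 x hx one hone
end

section
/- (Litmus test 7: an observed and locally flushed value survives crashes of both the writer and the reader) Assume machines 1, 2 and 3 are pairwise distinct, x ∈ Loc_3, and 1 is a value in Val with 1 ≠ 0. Then there is no configuration γ' such that γ_0 ⇒^{LStore_1(x,1)·Load_2(x,1)·LFlush_2(x)·Crash_1·Crash_2·Load_2(x,0)} γ', i.e., no execution from the initial configuration performs LStore_1(x,1), then Load_2(x,1), then LFlush_2(x), then Crash_1, then Crash_2, then Load_2(x,0), possibly interleaved with silent τ-steps. -/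
variable {Machine Loc Val : Type} [DecidableEq Machine] [DecidableEq Loc]

section LitmusHelpers

variable {owner : Loc → Machine} {vol : Machine → Bool} {z : Val}

lemma cxl_trace_cons_split :
    ∀ {γ γ'' : CXLConfig Machine Loc Val} {L : List (CXLLabel Machine Loc Val)},
      CXLTrace owner vol z γ L γ'' →
      ∀ {l ls}, L = l :: ls →
        ∃ γ1 γ2, CXLTauSteps owner vol z γ γ1 ∧ CXLStep owner vol z γ1 l γ2 ∧
          CXLTrace owner vol z γ2 ls γ'' := by
  intro γ γ'' L h
  induction h with
  | nil _ => intro l ls hl; cases hl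
  | tau h ht ih =>
      intro l ls hl
      obtain ⟨γ1, γ2, hts, hstep, htr⟩ := ih hl
      exact ⟨γ1, γ2, Relation.ReflTransGen.head h hts, hstep, htr⟩
  | cons h ht _ =>
      intro l ls hl
      cases hl
      exact ⟨_, _, Relation.ReflTransGen.refl, h, ht⟩

/-- Invariant holding after the initial store: every cache entry at `x` is
`⊥` or `one`, and the value `one` is present somewhere (cache or memory). -/
def PInv (m3 : Machine) (x : Loc) (one : Val) (γ : CXLConfig Machine Loc Val) : Prop :=
  (∀ j, γ.cache j x = none ∨ γ.cache j x = some one) ∧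
    ((∃ j, γ.cache j x = some one) ∨ γ.mem m3 x = one)

/-- Strong invariant: the value `one` is in the owner's cache or memory. -/
def QInv (m3 : Machine) (x : Loc) (one : Val) (γ : CXLConfig Machine Loc Val) : Prop :=
  (∀ j, γ.cache j x = none ∨ γ.cache j x = some one) ∧
    (γ.cache m3 x = some one ∨ γ.mem m3 x = one)

/-- Invariant holding after the load: `one` is in machine `m2`'s cache,
or already safely with the owner. -/
def RInv (m2 m3 : Machine) (x : Loc) (one : Val)
    (γ : CXLConfig Machine Loc Val) : Prop :=
  PInv m3 x one γ ∧ (γ.cache m2 x = some one ∨ QInv m3 x one γ)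

lemma tau_P {m3 : Machine} {x : Loc} {one : Val} (hx : owner x = m3)
    {γ γ' : CXLConfig Machine Loc Val}
    (h : CXLStep owner vol z γ .tau γ') (hp : PInv m3 x one γ) :
    PInv m3 x one γ' := by
  obtain ⟨h1, h2⟩ := hp
  cases h with
  | prop_cache_cache i y v hik hc =>
      by_cases hxy : x = y
      · subst hxy
        have hv : v = one := by rcases h1 i with h | h <;> rw [h] at hc <;> simp_all
        subst hv
        constructor
        · intro j
          by_cases hj3 : j = owner x
          · right; simp [hj3]
          · by_cases hji : j = i
            · left; simp [hj3, hji, hik]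
            · simpa [hj3, hji] using h1 j
        · exact Or.inl ⟨owner x, by simp⟩
      · constructor
        · intro j; simpa [hxy] using h1 j
        · rcases h2 with ⟨j, hj⟩ | hm
          · exact Or.inl ⟨j, by simpa [hxy] using hj⟩
          · exact Or.inr hm
  | prop_cache_mem y v hc =>
      by_cases hxy : x = y
      · subst hxy
        have hv : v = one := by rcases h1 (owner x) with h | h <;> rw [h] at hc <;> simp_all
        subst hv
        constructor
        · intro j; left; simp
        · exact Or.inr (by simp [hx.symm])
      · constructor
        · intro j; simpa [hxy] using h1 j
        · rcases h2 with ⟨j, hj⟩ | hm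
          · exact Or.inl ⟨j, by simpa [hxy] using hj⟩
          · exact Or.inr (by simpa [hxy] using hm)

lemma tau_Q {m3 : Machine} {x : Loc} {one : Val} (hx : owner x = m3)
    {γ γ' : CXLConfig Machine Loc Val}
    (h : CXLStep owner vol z γ .tau γ') (hq : QInv m3 x one γ) :
    QInv m3 x one γ' := by
  obtain ⟨h1, h2⟩ := hq
  cases h with
  | prop_cache_cache i y v hik hc =>
      by_cases hxy : x = y
      · subst hxy
        have hv : v = one := by rcases h1 i with h | h <;> rw [h] at hc <;> simp_all
        subst hv
        constructor
        · intro j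
          by_cases hj3 : j = owner x
          · right; simp [hj3]
          · by_cases hji : j = i
            · left; simp [hj3, hji, hik]
            · simpa [hj3, hji] using h1 j
        · exact Or.inl (by simp [hx])
      · constructor
        · intro j; simpa [hxy] using h1 j
        · rcases h2 with hc3 | hm
          · exact Or.inl (by simpa [hxy] using hc3)
          · exact Or.inr hm
  | prop_cache_mem y v hc =>
      by_cases hxy : x = y
      · subst hxy
        have hv : v = one := by rcases h1 (owner x) with h | h <;> rw [h] at hc <;> simp_all
        subst hv
        constructor
        · intro j; left; simp
        · exact Or.inr (by simp [hx.symm])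
      · constructor
        · intro j; simpa [hxy] using h1 j
        · rcases h2 with hc3 | hm
          · exact Or.inl (by simpa [hxy] using hc3)
          · exact Or.inr (by simpa [hxy] using hm)

lemma tau_R {m2 m3 : Machine} {x : Loc} {one : Val} (hx : owner x = m3)
    (h23 : m2 ≠ m3)
    {γ γ' : CXLConfig Machine Loc Val}
    (h : CXLStep owner vol z γ .tau γ') (hr : RInv m2 m3 x one γ) :
    RInv m2 m3 x one γ' := by
  obtain ⟨hp, hrest⟩ := hr
  have hp' : PInv m3 x one γ' := tau_P hx h hp
  refine ⟨hp', ?_⟩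
  rcases hrest with hc2 | hq
  · -- value in m2's cache
    cases h with
    | prop_cache_cache i y v hik hc =>
        by_cases hxy : x = y
        · subst hxy
          have hv : v = one := by
            rcases hp.1 i with h | h <;> rw [h] at hc <;> simp_all
          subst hv
          by_cases hi2 : i = m2
          · subst hi2
            exact Or.inr ⟨hp'.1, Or.inl (by simp [hx])⟩
          · refine Or.inl ?_
            have hm2o : m2 ≠ owner x := by rw [hx]; exact h23
            simp [hm2o, Ne.symm hi2, hc2]
        · exact Or.inl (by simpa [hxy] using hc2)
    | prop_cache_mem y v hc =>
        by_cases hxy : x = y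
        · subst hxy
          have hv : v = one := by
            rcases hp.1 (owner x) with h | h <;> rw [h] at hc <;> simp_all
          subst hv
          exact Or.inr ⟨fun j => Or.inl (by simp), Or.inr (by simp [hx.symm])⟩
        · exact Or.inl (by simpa [hxy] using hc2)
  · exact Or.inr (tau_Q hx h hq)

lemma taus_pres {Inv : CXLConfig Machine Loc Val → Prop}
    (hInv : ∀ {γ γ' : CXLConfig Machine Loc Val},
      CXLStep owner vol z γ .tau γ' → Inv γ → Inv γ')
    {γ γ' : CXLConfig Machine Loc Val}
    (h : CXLTauSteps owner vol z γ γ') (hI : Inv γ) : Inv γ' := by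
  induction h with
  | refl => exact hI
  | tail _ hstep ih => exact hInv hstep ih

end LitmusHelpers

/-- Litmus test 7: an observed and locally flushed value survives crashes of
both the writer and the reader. -/
theorem litmus_observed_flushed_value_survives_two_crashes
    (owner : Loc → Machine) (vol : Machine → Bool) (z : Val)
    (m1 m2 m3 : Machine) (h12 : m1 ≠ m2) (h13 : m1 ≠ m3) (h23 : m2 ≠ m3)
    (x : Loc) (hx : owner x = m3) (one : Val) (hone : one ≠ z) :
    ¬ ∃ γ' : CXLConfig Machine Loc Val,
      CXLTrace owner vol z (CXLInit Machine Loc z)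
        [.LStore m1 x one, .Load m2 x one, .LFlush m2 x,
         .Crash m1, .Crash m2, .Load m2 x z] γ' := by
  rintro ⟨γfin, htr⟩
  obtain ⟨a1, b1, t1, s1, htr⟩ := cxl_trace_cons_split htr rfl
  obtain ⟨a2, b2, t2, s2, htr⟩ := cxl_trace_cons_split htr rfl
  obtain ⟨a3, b3, t3, s3, htr⟩ := cxl_trace_cons_split htr rfl
  obtain ⟨a4, b4, t4, s4, htr⟩ := cxl_trace_cons_split htr rfl
  obtain ⟨a5, b5, t5, s5, htr⟩ := cxl_trace_cons_split htr rfl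
  obtain ⟨a6, b6, t6, s6, htr⟩ := cxl_trace_cons_split htr rfl
  -- after the LStore, PInv holds
  have hP1 : PInv m3 x one b1 := by
    cases s1 with
    | lstore =>
        constructor
        · intro j
          by_cases hj : j = m1
          · right; simp [hj]
          · left; simp [hj]
        · exact Or.inl ⟨m1, by simp⟩
  have hP2 : PInv m3 x one a2 := taus_pres (fun hs => tau_P hx hs) t2 hP1
  -- after the Load of `one` by m2, RInv holds
  have hR2 : RInv m2 m3 x one b2 := by
    cases s2 with
    | load_cache =>
        refine ⟨⟨?_, Or.inl ⟨m2, by simp⟩⟩, Or.inl (by simp)⟩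
        intro j'
        by_cases hj : j' = m2
        · right; simp [hj]
        · simpa [hj] using hP2.1 j'
    | load_mem =>
        rename_i hall hm
        exact ⟨hP2, Or.inr ⟨fun j => Or.inl (hall j), Or.inr (by rw [← hx]; exact hm)⟩⟩
  have hR3 : RInv m2 m3 x one a3 := taus_pres (fun hs => tau_R hx h23 hs) t3 hR2
  -- the LFlush forces QInv
  have hQ3 : QInv m3 x one b3 := by
    cases s3 with
    | lflush =>
        rename_i hc
        rcases hR3.2 with hc2 | hq
        · rw [hc] at hc2; cases hc2
        · exact hq
  have hQ4 : QInv m3 x one a4 := taus_pres (fun hs => tau_Q hx hs) t4 hQ3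
  -- the two crashes preserve QInv
  have crash_pres : ∀ (i : Machine), i ≠ m3 →
      ∀ {γ γ' : CXLConfig Machine Loc Val}, CXLStep owner vol z γ (.Crash i) γ' →
        QInv m3 x one γ → QInv m3 x one γ' := by
    intro i hi γ γ' h hq
    cases h with
    | crash =>
        obtain ⟨h1, h2⟩ := hq
        constructor
        · intro j
          by_cases hj : j = i
          · left; simp [hj]
          · simpa [hj] using h1 j
        · rcases h2 with hc3 | hm
          · exact Or.inl (by simpa [Ne.symm hi] using hc3)
          · exact Or.inr (by simpa [Ne.symm hi] using hm)
  have hQ5 : QInv m3 x one b4 := crash_pres m1 h13 s4 hQ4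
  have hQ6 : QInv m3 x one a5 := taus_pres (fun hs => tau_Q hx hs) t5 hQ5
  have hQ7 : QInv m3 x one b5 := crash_pres m2 h23 s5 hQ6
  have hQ8 : QInv m3 x one a6 := taus_pres (fun hs => tau_Q hx hs) t6 hQ7
  -- the final Load of `z` is impossible
  cases s6 with
  | load_cache =>
      rename_i j hc
      rcases hQ8.1 j with h | h <;> rw [hc] at h
      · cases h
      · exact hone (Option.some.inj h).symm
  | load_mem =>
      rename_i hall hm
      rcases hQ8.2 with hc3 | hmem
      · rw [hall m3] at hc3; cases hc3
      · rw [hx] at hm; rw [hm] at hmem; exact hone hmem.symm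
end

section
/- (Litmus test 8: a dependent update may survive while the update it depends on is lost, when RStore is used) Assume machines 1 and 2 are distinct, x ∈ Loc_2, y ∈ Loc_1, machines 1 and 2 have non-volatile memory, and 1 is a value in Val with 1 ≠ 0. Then there exists a configuration γ' such that γ_0 ⇒^{RStore_1(x,1)·RStore_2(y,1)·Crash_2·Load_1(y,1)·Load_1(x,0)} γ', i.e., some execution from the initial configuration performs RStore_1(x,1), then RStore_2(y,1), then Crash_2, then Load_1(y,1), then Load_1(x,0), possibly interleaved with silent τ-steps. -/
variable {Machine Loc Val : Type} [DecidableEq Machine] [DecidableEq Loc]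

/-- Litmus test 8: with `RStore`, a dependent update may survive while the
update it depends on is lost. -/
theorem litmus_dependent_update_may_survive
    (owner : Loc → Machine) (vol : Machine → Bool) (z : Val)
    (m1 m2 : Machine) (h12 : m1 ≠ m2)
    (x y : Loc) (hx : owner x = m2) (hy : owner y = m1)
    (hnv1 : vol m1 = false) (hnv2 : vol m2 = false)
    (one : Val) (hone : one ≠ z) :
    ∃ γ' : CXLConfig Machine Loc Val,
      CXLTrace owner vol z (CXLInit Machine Loc z)
        [.RStore m1 x one, .RStore m2 y one, .Crash m2,
         .Load m1 y one, .Load m1 x z] γ' := by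
  have hxy : x ≠ y := fun h => h12 (by rw [← hy, ← hx, h])
  refine ⟨_, CXLTrace.cons (CXLStep.rstore _ m1 x one)
    (CXLTrace.cons (CXLStep.rstore _ m2 y one)
      (CXLTrace.cons (CXLStep.crash _ m2)
        (CXLTrace.cons (CXLStep.load_cache _ m1 m1 y one ?_)
          (CXLTrace.cons (CXLStep.load_mem _ m1 x z ?_ ?_) (CXLTrace.nil _)))))⟩
  · simp [h12, hy, hxy]
  · intro j
    by_cases hj : j = m2 <;> simp [hj, hxy, hx, h12, Ne.symm hxy, CXLInit]
  · simp [CXLInit]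
end

section
/- (Key claim in the proof of Proposition 1(7)) For any machines j, k with j ≠ k, any location x ∈ Loc_k, any value v, and any configurations γ_1, γ_2, γ_3, γ_4: if γ_1 →^{LStore_j(x,v)} γ_2, γ_3 is reachable from γ_2 by a (possibly empty) finite sequence consisting solely of silent τ-steps (internal propagation steps), and γ_3 →^{LFlush_j(x)} γ_4, then γ_1 ⇒^{RStore_j(x,v)} γ_4, i.e., γ_4 is reachable from γ_1 by a transition sequence consisting of RStore_j(x,v) possibly interleaved with silent τ-steps. -/
variable {Machine Loc Val : Type} [DecidableEq Machine] [DecidableEq Loc]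

/-! Right after `LStore_j(x,v)` machine `j` holds the only cached copy of `x`. As long as it
keeps it, every τ-step acts on other locations and so can be replayed verbatim from the
configuration that `RStore_j(x,v)` produces, in which the copy sits in the owner's cache instead.
The only τ-step that touches `x` moves `j`'s copy to the owner, and lands exactly in the replayed
configuration. Since `LFlush_j(x)` requires `j`'s copy to be gone, this step must occur. -/

attribute [ext] CXLConfig

namespace CXLConfig

def cacheColumn (γ : CXLConfig Machine Loc Val) (x : Loc) : Machine → Option Val :=
  fun i => γ.cache i x

def overwriteCacheAt (x : Loc) (c : Machine → Option Val) (γ : CXLConfig Machine Loc Val) :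
    CXLConfig Machine Loc Val :=
  ⟨fun i y => if y = x then c i else γ.cache i y, γ.mem⟩

@[simp]
lemma overwriteCacheAt_overwriteCacheAt {M L V : Type} [DecidableEq L] (x : L)
    (c c' : M → Option V) (γ : CXLConfig M L V) :
    overwriteCacheAt x c (overwriteCacheAt x c' γ) = overwriteCacheAt x c γ := by
  ext i y <;> by_cases hy : y = x <;> simp [overwriteCacheAt, hy]

@[simp]
lemma cacheColumn_overwriteCacheAt {M L V : Type} [DecidableEq L] (x : L)
    (c : M → Option V) (γ : CXLConfig M L V) : (overwriteCacheAt x c γ).cacheColumn x = c := by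
  funext i; simp [cacheColumn, overwriteCacheAt]

end CXLConfig

def soleCopy (j : Machine) (v : Val) : Machine → Option Val :=
  fun i => if i = j then some v else none

open CXLConfig

section

variable {owner : Loc → Machine} {vol : Machine → Bool} {z : Val}

lemma CXLTrace.of_tauSteps {γ γ' : CXLConfig Machine Loc Val}
    (h : CXLTauSteps owner vol z γ γ') : CXLTrace owner vol z γ [] γ' := by
  induction h using Relation.ReflTransGen.head_induction_on with
  | refl => exact .nil _
  | head hs _ ih => exact .tau hs ih

lemma tau_step_of_soleCopy {j : Machine} {x : Loc} {v : Val}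
    (hjx : j ≠ owner x) {γ δ : CXLConfig Machine Loc Val}
    (hγ : γ.cacheColumn x = soleCopy j v) (hs : CXLStep owner vol z γ .tau δ) :
    δ = overwriteCacheAt x (soleCopy (owner x) v) γ ∨
      δ.cacheColumn x = soleCopy j v ∧
        CXLStep owner vol z (overwriteCacheAt x (soleCopy (owner x) v) γ) .tau
          (overwriteCacheAt x (soleCopy (owner x) v) δ) := by
  have hcol (i : Machine) : γ.cache i x = soleCopy j v i := congrFun hγ i
  cases hs with
  | prop_cache_cache i y w hiy hw =>
    by_cases hy : y = x
    · subst hy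
      obtain ⟨rfl, rfl⟩ : i = j ∧ w = v := by
        by_cases hij : i = j <;> simp_all [soleCopy]
      left
      ext i' y' <;> by_cases hy' : y' = y <;> simp_all [overwriteCacheAt, soleCopy]
    · right
      refine ⟨funext fun i' => by simp [cacheColumn, Ne.symm hy, hcol], ?_⟩
      convert CXLStep.prop_cache_cache (overwriteCacheAt x (soleCopy (owner x) v) γ) i y w hiy
        (by simpa [overwriteCacheAt, hy] using hw) using 1
      ext i' y' <;> by_cases hy' : y' = y <;> by_cases hx' : y' = x <;> simp_all [overwriteCacheAt]
  | prop_cache_mem y w hw =>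
    by_cases hy : y = x
    · subst hy
      simp [hcol, soleCopy, Ne.symm hjx] at hw
    · right
      refine ⟨funext fun i' => by simp [cacheColumn, Ne.symm hy, hcol], ?_⟩
      convert CXLStep.prop_cache_mem (overwriteCacheAt x (soleCopy (owner x) v) γ) y w
        (by simpa [overwriteCacheAt, hy] using hw) using 1
      ext i' y' <;> by_cases hy' : y' = y <;> by_cases hx' : y' = x <;> simp_all [overwriteCacheAt]

lemma tauSteps_of_soleCopy {j : Machine} {x : Loc} {v : Val} (hjx : j ≠ owner x)
    {γ γ' : CXLConfig Machine Loc Val} (h : CXLTauSteps owner vol z γ γ')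
    (hγ : γ.cacheColumn x = soleCopy j v) :
    CXLTauSteps owner vol z (overwriteCacheAt x (soleCopy (owner x) v) γ) γ' ∨
      γ'.cacheColumn x = soleCopy j v := by
  induction h using Relation.ReflTransGen.head_induction_on with
  | refl => exact .inr hγ
  | head hs hrest ih =>
    rcases tau_step_of_soleCopy hjx hγ hs with rfl | ⟨hδ, hstep⟩
    · exact .inl hrest
    · exact (ih hδ).imp_left (.head hstep)

end

/-- Key claim in the proof of Proposition 1(7): an `LStore` by a non-owner,
followed by internal propagation steps and an `LFlush`, is simulated by an
`RStore` (up to `τ`-steps). -/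
theorem lstore_taus_lflush_simulated_by_rstore
    (owner : Loc → Machine) (vol : Machine → Bool) (z : Val)
    (j k : Machine) (hjk : j ≠ k) (x : Loc) (hx : owner x = k) (v : Val)
    (γ₁ γ₂ γ₃ γ₄ : CXLConfig Machine Loc Val)
    (h1 : CXLStep owner vol z γ₁ (.LStore j x v) γ₂)
    (h2 : CXLTauSteps owner vol z γ₂ γ₃)
    (h3 : CXLStep owner vol z γ₃ (.LFlush j x) γ₄) :
    CXLTrace owner vol z γ₁ [.RStore j x v] γ₄ := by
  subst hx
  cases h1
  cases h3 with
  | lflush _ _ hflushed =>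
    rcases tauSteps_of_soleCopy (γ := overwriteCacheAt x (soleCopy j v) γ₁) hjk h2
        (cacheColumn_overwriteCacheAt x _ γ₁) with h | h
    · rw [overwriteCacheAt_overwriteCacheAt] at h
      exact .cons (.rstore γ₁ j x v) (.of_tauSteps h)
    · exact absurd (congrFun h j) (by simp [cacheColumn, soleCopy, hflushed])
end

section
/- (Nested claim in the proof of Proposition 1(8)) For any machine j, any location x, any value v, and any configurations γ_1, γ_2, γ_3, γ_4: if γ_1 →^{RStore_j(x,v)} γ_2, γ_3 is reachable from γ_2 by a (possibly empty) finite sequence consisting solely of silent τ-steps (internal propagation steps), and γ_3 →^{RFlush_j(x)} γ_4, then γ_1 ⇒^{MStore_j(x,v)} γ_4, i.e., γ_4 is reachable from γ_1 by a transition sequence consisting of MStore_j(x,v) possibly interleaved with silent τ-steps. -/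
variable {Machine Loc Val : Type} [DecidableEq Machine] [DecidableEq Loc]

namespace CXLConfig

section
variable (owner : Loc → Machine) (x : Loc) (v : Val)

def memStore (δ : CXLConfig Machine Loc Val) : CXLConfig Machine Loc Val :=
  ⟨fun i y => if y = x then none else δ.cache i y,
   fun i y => if i = owner x ∧ y = x then v else δ.mem i y⟩

/-- The value of `x` is `v`: in the owner's cache if it holds `x`, in the owner's memory
otherwise. -/
def OwnerHolds (δ : CXLConfig Machine Loc Val) : Prop :=
  (∀ i, i ≠ owner x → δ.cache i x = none) ∧
    (δ.cache (owner x) x).getD (δ.mem (owner x) x) = v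

end

variable {owner : Loc → Machine} {vol : Machine → Bool} {z : Val} {x : Loc} {v : Val}
  {δ δ' : CXLConfig Machine Loc Val}

@[simp]
theorem memStore_memStore (v' : Val) :
    (δ.memStore owner x v').memStore owner x v = δ.memStore owner x v := by
  ext i y : 3 <;> simp only [memStore] <;> split_ifs <;> simp_all

theorem memStore_eq_self (hδ : δ.OwnerHolds owner x v) (hx : ∀ i, δ.cache i x = none) :
    δ.memStore owner x v = δ := by
  have hmem : δ.mem (owner x) x = v := by simpa [hx] using hδ.2
  ext i y : 3 <;> simp only [memStore] <;> split_ifs <;> simp_all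

namespace OwnerHolds

theorem tau (hδ : δ.OwnerHolds owner x v) (h : CXLStep owner vol z δ .tau δ') :
    δ'.OwnerHolds owner x v := by
  cases h with
  | prop_cache_cache i y w hi hw =>
    obtain rfl | hyx := eq_or_ne y x
    · simp [hδ.1 i hi] at hw
    · simpa [OwnerHolds, hyx.symm] using hδ
  | prop_cache_mem y w hw =>
    obtain rfl | hyx := eq_or_ne y x
    · exact ⟨fun _ _ => by simp, by simpa [hw] using hδ.2⟩
    · simpa [OwnerHolds, hyx.symm] using hδ

theorem memStore_tau (hδ : δ.OwnerHolds owner x v) (h : CXLStep owner vol z δ .tau δ') :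
    CXLTauSteps owner vol z (δ.memStore owner x v) (δ'.memStore owner x v) := by
  cases h with
  | prop_cache_cache i y w hi hw =>
    obtain rfl | hyx := eq_or_ne y x
    · simp [hδ.1 i hi] at hw
    · refine .single ?_
      convert CXLStep.prop_cache_cache (δ.memStore owner x v) i y w hi
        (by simpa [memStore, hyx] using hw) using 1
      ext i' y' : 3 <;> simp only [memStore]
      split_ifs <;> simp_all
  | prop_cache_mem y w hw =>
    obtain rfl | hyx := eq_or_ne y x
    · -- the write-back of `y` is itself `memStore y w`
      change CXLTauSteps owner vol z _ ((δ.memStore owner y w).memStore owner y v)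
      rw [memStore_memStore]
      exact .refl
    · refine .single ?_
      convert CXLStep.prop_cache_mem (δ.memStore owner x v) y w
        (by simpa [memStore, hyx] using hw) using 1
      ext i' y' : 3 <;> simp only [memStore] <;> split_ifs <;> simp_all

theorem tauSteps (hδ : δ.OwnerHolds owner x v) (h : CXLTauSteps owner vol z δ δ') :
    δ'.OwnerHolds owner x v ∧
      CXLTauSteps owner vol z (δ.memStore owner x v) (δ'.memStore owner x v) := by
  induction h with
  | refl => exact ⟨hδ, .refl⟩
  | tail _ hstep ih => exact ⟨tau ih.1 hstep, ih.2.trans (memStore_tau ih.1 hstep)⟩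

end OwnerHolds

end CXLConfig

open CXLConfig

section
variable {owner : Loc → Machine} {vol : Machine → Bool} {z : Val} {x : Loc} {v : Val}
  {γ γ' : CXLConfig Machine Loc Val} {j : Machine}

theorem CXLStep.ownerHolds_of_rstore (h : CXLStep owner vol z γ (.RStore j x v) γ') :
    γ'.OwnerHolds owner x v := by
  cases h
  exact ⟨fun i hi => by simp [hi], by simp⟩

theorem CXLStep.memStore_of_rstore (h : CXLStep owner vol z γ (.RStore j x v) γ') :
    γ'.memStore owner x v = γ.memStore owner x v := by
  cases h
  ext i y : 3 <;> simp only [memStore]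
  split_ifs <;> simp_all

theorem CXLTrace.of_tauSteps_of_trace {γ'' : CXLConfig Machine Loc Val}
    {ls : List (CXLLabel Machine Loc Val)} (h : CXLTauSteps owner vol z γ γ')
    (ht : CXLTrace owner vol z γ' ls γ'') : CXLTrace owner vol z γ ls γ'' := by
  induction h using Relation.ReflTransGen.head_induction_on with
  | refl => exact ht
  | head hstep _ ih => exact .tau hstep ih

end

/-- Nested claim in the proof of Proposition 1(8): an `RStore`, followed by
internal propagation steps and an `RFlush`, is simulated by an `MStore`
(up to `τ`-steps). -/
theorem rstore_taus_rflush_simulated_by_mstore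
    (owner : Loc → Machine) (vol : Machine → Bool) (z : Val)
    (j : Machine) (x : Loc) (v : Val)
    (γ₁ γ₂ γ₃ γ₄ : CXLConfig Machine Loc Val)
    (h1 : CXLStep owner vol z γ₁ (.RStore j x v) γ₂)
    (h2 : CXLTauSteps owner vol z γ₂ γ₃)
    (h3 : CXLStep owner vol z γ₃ (.RFlush j x) γ₄) :
    CXLTrace owner vol z γ₁ [.MStore j x v] γ₄ := by
  obtain ⟨hγ₃, hpath⟩ := h1.ownerHolds_of_rstore.tauSteps h2
  cases h3 with
  | rflush _ _ hx =>
    rw [h1.memStore_of_rstore, memStore_eq_self hγ₃ hx] at hpath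
    exact .cons (.mstore γ₁ j x v) (.of_tauSteps_of_trace hpath (.nil γ₃))
end
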